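/- arXiv:math/9911102 — 5 statements merged into one kernel-verified Lean document; each statement's English description precedes it below -/
import Mathlib

section
/- Let a group Γ act on a set X, let x₀ ∈ X, and let ψ : Γ → (X → ℝ) be a family of functions such that (i) for all γ, γ' ∈ Γ the quantity ψ_γ(x) + ψ_{γ'}(γ·x) − ψ_{γ'γ}(x) is independent of x ∈ X, and (ii) ψ_γ(x₀) = 0 for all γ ∈ Γ. Then the function σ : Γ × Γ → U(1) defined by σ(γ₁,γ₂) = exp(i·ψ_{γ₁}(γ₂·x₀)) is a multiplier on Γ: it satisfies σ(γ,1) = σ(1,γ) = 1 for all γ ∈ Γ and the cocycle identity σ(γ₁,γ₂)·σ(γ₁γ₂,γ₃) = σ(γ₁,γ₂γ₃)·σ(γ₂,γ₃) for all γ₁,γ₂,γ₃ ∈ Γ. -/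
/-!
Writing `c(γ₁, γ₂) = ψ_{γ₁}(γ₂·x₀)`, hypothesis (i) evaluated at `x = γ₃·x₀` and at `x = x₀`,
together with (ii), says exactly that `c` is a real-valued additive 2-cocycle vanishing on
`(γ, 1)` and `(1, γ)`; `σ = exp(i c)` then inherits all multiplier identities, since
`t ↦ exp(i t)` turns sums into products and takes values in `U(1)`.
-/

section

variable {M X : Type*} [Monoid M] [MulAction M X] {ψ : M → X → ℝ}

theorem psi_one_eq_zero_of_indep
    (h1 : ∀ (γ γ' : M) (x y : X),
      ψ γ x + ψ γ' (γ • x) - ψ (γ' * γ) x = ψ γ y + ψ γ' (γ • y) - ψ (γ' * γ) y)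
    {x₀ : X} (h₀ : ψ 1 x₀ = 0) (x : X) :
    ψ 1 x = 0 := by
  simpa [h₀] using h1 1 1 x x₀

theorem psi_smul_add_eq_of_indep
    (h1 : ∀ (γ γ' : M) (x y : X),
      ψ γ x + ψ γ' (γ • x) - ψ (γ' * γ) x = ψ γ y + ψ γ' (γ • y) - ψ (γ' * γ) y)
    {x₀ : X} (h2 : ∀ γ : M, ψ γ x₀ = 0) (γ₁ γ₂ γ₃ : M) :
    ψ γ₁ (γ₂ • x₀) + ψ (γ₁ * γ₂) (γ₃ • x₀) = ψ γ₁ ((γ₂ * γ₃) • x₀) + ψ γ₂ (γ₃ • x₀) := by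
  have h := h1 γ₂ γ₁ (γ₃ • x₀) x₀
  rw [h2, h2, ← mul_smul] at h
  linarith

end

/-- Given a group action of `Γ` on `X`, a base point `x₀` and a
family `ψ : Γ → X → ℝ` such that `ψ_γ(x) + ψ_{γ'}(γ·x) − ψ_{γ'γ}(x)` is
independent of `x` and `ψ_γ(x₀) = 0`, the function
`σ(γ₁,γ₂) = exp(i ψ_{γ₁}(γ₂·x₀))` is a multiplier on `Γ`: it takes values in
`U(1)`, is normalized, and satisfies the cocycle identity. -/
theorem exp_psi_is_multiplier
    {Γ X : Type*} [Group Γ] [MulAction Γ X] (x₀ : X) (ψ : Γ → X → ℝ)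
    (h1 : ∀ (γ γ' : Γ) (x y : X),
      ψ γ x + ψ γ' (γ • x) - ψ (γ' * γ) x
        = ψ γ y + ψ γ' (γ • y) - ψ (γ' * γ) y)
    (h2 : ∀ γ : Γ, ψ γ x₀ = 0) :
    letI σ : Γ → Γ → ℂ :=
      fun γ₁ γ₂ => Complex.exp (Complex.I * (ψ γ₁ (γ₂ • x₀) : ℂ))
    (∀ γ δ : Γ, ‖σ γ δ‖ = 1) ∧
    (∀ γ : Γ, σ γ 1 = 1 ∧ σ 1 γ = 1) ∧
    (∀ γ₁ γ₂ γ₃ : Γ,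
      σ γ₁ γ₂ * σ (γ₁ * γ₂) γ₃ = σ γ₁ (γ₂ * γ₃) * σ γ₂ γ₃) := by
  refine ⟨fun γ δ => Complex.norm_exp_I_mul_ofReal _, fun γ => ⟨?_, ?_⟩, fun γ₁ γ₂ γ₃ => ?_⟩
  · simp [h2]
  · simp [psi_one_eq_zero_of_indep h1 (h2 1)]
  · simp only [← Complex.exp_add, ← mul_add]
    exact_mod_cast congrArg (fun t : ℝ => Complex.exp (Complex.I * t))
      (psi_smul_add_eq_of_indep h1 h2 γ₁ γ₂ γ₃)
end

section
/- Let Γ be a discrete group, σ a multiplier on Γ, and let v₁, …, v_N be an orthonormal family in ℓ²(Γ) whose linear span V is invariant under the left σ-regular operators L^σ_γ for every γ ∈ Γ. Then the function γ' ↦ Σ_{j=1}^N |v_j(γ')|² on Γ is constant; that is, for all γ', δ' ∈ Γ, Σ_{j=1}^N |v_j(γ')|² = Σ_{j=1}^N |v_j(δ')|². -/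
/-!
Since `|σ| = 1`, the twisted translation `f ↦ (x ↦ f (γ⁻¹ x) σ(γ, γ⁻¹ x))` preserves inner
products, so it maps `v` to an orthonormal family `w` in `V`; having `N = dim V` members, `w` is
again an orthonormal basis of `V`. Now `Σ_j |u_j(x)|² = Σ_j |⟨u_j, δ_x⟩|² = ‖P_V δ_x‖²` is the
same for every orthonormal basis `u` of `V`, and `|w_j(γ')| = |v_j(δ')|` for `γ = γ' δ'⁻¹`.
-/

open Submodule Set
open scoped InnerProductSpace ComplexConjugate

theorem Submodule.span_range_eq_of_le_of_linearIndependent {K V ι : Type*} [DivisionRing K]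
    [AddCommGroup V] [Module K V] [Fintype ι] {v w : ι → V} (hw : LinearIndependent K w)
    (hle : span K (range w) ≤ span K (range v)) : span K (range w) = span K (range v) :=
  haveI := FiniteDimensional.span_of_finite K (finite_range v)
  eq_of_le_of_finrank_le hle ((finrank_range_le_card v).trans (finrank_span_eq_card hw).ge)

section InnerProductSpace

variable {𝕜 E ι κ : Type*} [RCLike 𝕜] [NormedAddCommGroup E] [InnerProductSpace 𝕜 E]
  [Fintype ι] [Fintype κ]

theorem Orthonormal.sum_sq_norm_inner_eq_sq_norm_orthogonalProjectionOnto {U : Submodule 𝕜 E}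
    [U.HasOrthogonalProjection] {v : ι → E} (hv : Orthonormal 𝕜 v) (hU : span 𝕜 (range v) = U)
    (x : E) : ∑ i, ‖⟪v i, x⟫_𝕜‖ ^ 2 = ‖U.orthogonalProjectionOnto x‖ ^ 2 := by
  subst hU
  let b : OrthonormalBasis ι 𝕜 (span 𝕜 (range v)) :=
    .mk (orthonormal_span hv) (by
      simpa only [Module.Basis.span, Module.Basis.coe_mk] using
        (Module.Basis.span hv.linearIndependent).span_eq.ge)
  rw [← b.sum_sq_norm_inner_right]
  simp [b]

theorem Orthonormal.sum_sq_norm_inner_eq_of_span_eq {v : ι → E} {w : κ → E}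
    (hv : Orthonormal 𝕜 v) (hw : Orthonormal 𝕜 w) (h : span 𝕜 (range v) = span 𝕜 (range w))
    (x : E) : ∑ i, ‖⟪v i, x⟫_𝕜‖ ^ 2 = ∑ j, ‖⟪w j, x⟫_𝕜‖ ^ 2 := by
  have := FiniteDimensional.span_of_finite 𝕜 (finite_range w)
  rw [hv.sum_sq_norm_inner_eq_sq_norm_orthogonalProjectionOnto h,
    hw.sum_sq_norm_inner_eq_sq_norm_orthogonalProjectionOnto rfl]

end InnerProductSpace

namespace lp

variable {𝕜 α β : Type*} [RCLike 𝕜]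

theorem norm_apply_eq_norm_inner_single [DecidableEq α] (f : lp (fun _ : α => 𝕜) 2) (a : α) :
    ‖f a‖ = ‖⟪f, lp.single 2 a (1 : 𝕜)⟫_𝕜‖ := by
  simp [inner_single_right]

theorem inner_eq_of_apply_eq_mul_comp (e : α ≃ β) (u : α → 𝕜) (hu : ∀ a, ‖u a‖ = 1)
    {f g : lp (fun _ : β => 𝕜) 2} {f' g' : lp (fun _ : α => 𝕜) 2}
    (hf : ∀ a, f' a = f (e a) * u a) (hg : ∀ a, g' a = g (e a) * u a) :
    ⟪f', g'⟫_𝕜 = ⟪f, g⟫_𝕜 := by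
  have h : ∀ a, ⟪f' a, g' a⟫_𝕜 = ⟪f (e a), g (e a)⟫_𝕜 := fun a => by
    have hu' : conj (u a) * u a = 1 := by rw [RCLike.conj_mul, hu]; simp
    simp only [hf, hg, RCLike.inner_apply, map_mul]
    linear_combination (g (e a) * conj (f (e a))) * hu'
  rw [inner_eq_tsum, inner_eq_tsum, tsum_congr h]
  exact e.tsum_eq fun b => ⟪f b, g b⟫_𝕜

end lp

theorem sum_sq_of_invariant_orthonormal_family_constant_general
    {Γ : Type*} [Group Γ] (σ : Γ → Γ → ℂ)
    (hnorm : ∀ γ δ : Γ, ‖σ γ δ‖ = 1)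
    (N : ℕ) (v : Fin N → lp (fun _ : Γ => ℂ) 2)
    (hON : Orthonormal ℂ v)
    (hInv : ∀ γ : Γ, ∀ f ∈ Submodule.span ℂ (Set.range v),
      ∃ g ∈ Submodule.span ℂ (Set.range v),
        ∀ x : Γ, (g : Γ → ℂ) x = f (γ⁻¹ * x) * σ γ (γ⁻¹ * x)) :
    ∀ γ' δ' : Γ,
      ∑ j : Fin N, ‖(v j : Γ → ℂ) γ'‖ ^ 2
        = ∑ j : Fin N, ‖(v j : Γ → ℂ) δ'‖ ^ 2 := by
  classical
  intro γ' δ'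
  set γ := γ' * δ'⁻¹
  choose w hw_mem hw_apply using fun j => hInv γ (v j) (subset_span (mem_range_self j))
  have hw : Orthonormal ℂ w := orthonormal_iff_ite.2 fun i j => by
    rw [lp.inner_eq_of_apply_eq_mul_comp (Equiv.mulLeft γ⁻¹) _ (fun _ => hnorm _ _) (hw_apply i)
      (hw_apply j), orthonormal_iff_ite.1 hON]
  have hspan : span ℂ (range w) = span ℂ (range v) :=
    span_range_eq_of_le_of_linearIndependent hw.linearIndependent
      (span_le.2 (range_subset_iff.2 hw_mem))
  calc ∑ j, ‖(v j : Γ → ℂ) γ'‖ ^ 2 = ∑ j, ‖(w j : Γ → ℂ) γ'‖ ^ 2 := by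
        simp only [lp.norm_apply_eq_norm_inner_single]
        exact hON.sum_sq_norm_inner_eq_of_span_eq hw hspan.symm _
    _ = ∑ j, ‖(v j : Γ → ℂ) δ'‖ ^ 2 := by
        simp [hw_apply, hnorm, γ, mul_assoc]

/-- If `v₁, …, v_N` is an orthonormal family in `ℓ²(Γ)` whose
linear span is invariant under all the left `σ`-regular operators `L^σ_γ`,
then the function `γ' ↦ Σ_j |v_j(γ')|²` is constant on `Γ`. -/
theorem sum_sq_of_invariant_orthonormal_family_constant
    {Γ : Type*} [Group Γ] (σ : Γ → Γ → ℂ)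
    (hnorm : ∀ γ δ : Γ, ‖σ γ δ‖ = 1)
    (hone : ∀ γ : Γ, σ γ 1 = 1 ∧ σ 1 γ = 1)
    (hcoc : ∀ γ₁ γ₂ γ₃ : Γ,
      σ γ₁ γ₂ * σ (γ₁ * γ₂) γ₃ = σ γ₁ (γ₂ * γ₃) * σ γ₂ γ₃)
    (N : ℕ) (v : Fin N → lp (fun _ : Γ => ℂ) 2)
    (hON : Orthonormal ℂ v)
    (hInv : ∀ γ : Γ, ∀ f ∈ Submodule.span ℂ (Set.range v),
      ∃ g ∈ Submodule.span ℂ (Set.range v),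
        ∀ x : Γ, (g : Γ → ℂ) x = f (γ⁻¹ * x) * σ γ (γ⁻¹ * x)) :
    ∀ γ' δ' : Γ,
      ∑ j : Fin N, ‖(v j : Γ → ℂ) γ'‖ ^ 2
        = ∑ j : Fin N, ‖(v j : Γ → ℂ) δ'‖ ^ 2 :=
  sum_sq_of_invariant_orthonormal_family_constant_general σ hnorm N v hON hInv
end

section
/- Let Γ be an infinite discrete group and σ a multiplier on Γ. Every finite-dimensional subspace V of ℓ²(Γ) that is invariant under the left σ-regular operators L^σ_γ for all γ ∈ Γ is the zero subspace. Equivalently, every nonzero closed subspace of ℓ²(Γ) invariant under the left σ-regular representation is infinite dimensional. -/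
/-!
Suppose `f ∈ V` has `f x₀ ≠ 0`. Because `V` is finite-dimensional, the coordinates on some
finite set `S` already separate the points of `V`, so the norm of an element of `V` is controlled
by its values on `S`. Since `f ∈ ℓ²`, it is small outside a finite set `T`, and as `Γ` is infinite
some `γ` moves `S` off `γT`. The translate `L^σ_γ f ∈ V` is then small on `S`, hence of small
norm, although `|σ| = 1` gives it the value of modulus `|f x₀|` at `γ x₀`.
-/

open scoped ENNReal Pointwise

theorem exists_finset_biInf_eq_iInf {α ι : Type*} [CompleteLattice α] [WellFoundedLT α]
    (f : ι → α) : ∃ S : Finset ι, ⨅ i ∈ S, f i = ⨅ i, f i := by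
  classical
  obtain ⟨_, ⟨S, rfl⟩, hmin⟩ :=
    wellFounded_lt.has_min (Set.range fun S : Finset ι => ⨅ i ∈ S, f i) ⟨_, ∅, rfl⟩
  refine ⟨S, le_antisymm (le_iInf fun j => ?_) (le_iInf₂ fun i _ => iInf_le f i)⟩
  have hle : ⨅ i ∈ insert j S, f i ≤ ⨅ i ∈ S, f i :=
    biInf_mono fun _ => Finset.mem_insert_of_mem
  rw [← (hle.lt_or_eq.resolve_left (hmin _ ⟨_, rfl⟩))]
  exact biInf_le f (Finset.mem_insert_self j S)

theorem Group.exists_inv_mul_notMem {G : Type*} [Group G] [Infinite G] [DecidableEq G]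
    (S T : Finset G) : ∃ g : G, ∀ x ∈ S, g⁻¹ * x ∉ T := by
  obtain ⟨g, hg⟩ := Infinite.exists_notMem_finset (S * T⁻¹)
  refine ⟨g, fun x hx hxT => hg ?_⟩
  simpa using Finset.mul_mem_mul hx (Finset.inv_mem_inv hxT)

namespace lp

variable {ι 𝕜 : Type*} {E : ι → Type*} [∀ i, NormedAddCommGroup (E i)] {p : ℝ≥0∞}

theorem finite_setOf_le_norm_apply (hp : 0 < p.toReal) (f : lp E p) {δ : ℝ} (hδ : 0 < δ) :
    {i | δ ≤ ‖f i‖}.Finite := by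
  have hsmall : ∀ᶠ i in Filter.cofinite, ‖f i‖ ^ p.toReal < δ ^ p.toReal :=
    ((lp.memℓp f).summable hp).tendsto_cofinite_zero.eventually_lt_const (by positivity)
  refine (Filter.eventually_cofinite.mp hsmall).subset fun i hi => ?_
  exact not_lt.mpr (Real.rpow_le_rpow hδ.le hi hp.le)

variable [NontriviallyNormedField 𝕜] [CompleteSpace 𝕜] [∀ i, NormedSpace 𝕜 (E i)] [Fact (1 ≤ p)]

theorem exists_finset_norm_lt_of_forall_norm_apply_lt (V : Submodule 𝕜 (lp E p))
    [FiniteDimensional 𝕜 V] {ε : ℝ} (hε : 0 < ε) :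
    ∃ S : Finset ι, ∃ δ > 0, ∀ f ∈ V, (∀ i ∈ S, ‖f i‖ < δ) → ‖f‖ < ε := by
  let ev : ∀ i, V →ₗ[𝕜] E i := fun i => (evalₗ E p i).comp V.subtype
  have hker : ⨅ i, LinearMap.ker (ev i) = ⊥ := by
    refine eq_bot_iff.mpr fun f hf => ?_
    simp only [Submodule.mem_iInf, LinearMap.mem_ker] at hf
    exact Subtype.ext (lp.ext (funext hf))
  obtain ⟨S, hS⟩ := exists_finset_biInf_eq_iInf fun i => LinearMap.ker (ev i)
  let evS : V →ₗ[𝕜] ∀ i : S, E i := LinearMap.pi fun i => ev i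
  have hkerS : LinearMap.ker evS = ⊥ := by
    rw [LinearMap.ker_pi, ← hker, ← hS, iInf_subtype']
  obtain ⟨C, hC, hanti⟩ := evS.exists_antilipschitzWith hkerS
  have hC : (0 : ℝ) < C := hC
  refine ⟨S, ε / C, div_pos hε hC, fun f hf hfS => ?_⟩
  have hsmall : ‖evS ⟨f, hf⟩‖ < ε / C :=
    (pi_norm_lt_iff (div_pos hε hC)).mpr fun i => hfS i i.2
  calc ‖f‖ = ‖(⟨f, hf⟩ : V)‖ := rfl
    _ ≤ C * ‖evS ⟨f, hf⟩‖ := by simpa using hanti.le_mul_dist ⟨f, hf⟩ 0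
    _ < C * (ε / C) := by gcongr
    _ = ε := mul_div_cancel₀ ε hC.ne'

end lp

theorem finiteDimensional_invariant_subspace_eq_bot_general
    {Γ : Type*} [Group Γ] [Infinite Γ] (σ : Γ → Γ → ℂ)
    (hnorm : ∀ γ δ : Γ, ‖σ γ δ‖ = 1)
    (V : Submodule ℂ (lp (fun _ : Γ => ℂ) 2))
    (hfd : FiniteDimensional ℂ V)
    (hInv : ∀ γ : Γ, ∀ f ∈ V, ∃ g ∈ V,
      ∀ x : Γ, (g : Γ → ℂ) x = f (γ⁻¹ * x) * σ γ (γ⁻¹ * x)) :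
    V = ⊥ := by
  classical
  refine (Submodule.eq_bot_iff V).mpr fun f hf => lp.ext <| funext fun x₀ => ?_
  by_contra hx₀
  have ha : 0 < ‖f x₀‖ := norm_pos_iff.mpr hx₀
  obtain ⟨S, δ, hδ, hS⟩ := lp.exists_finset_norm_lt_of_forall_norm_apply_lt V ha
  obtain ⟨γ, hγ⟩ := Group.exists_inv_mul_notMem S
    (lp.finite_setOf_le_norm_apply (by norm_num) f hδ).toFinset
  obtain ⟨g, hgV, hg⟩ := hInv γ f hf
  have hg_norm : ∀ x, ‖g x‖ = ‖f (γ⁻¹ * x)‖ := by simp [hg, hnorm]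
  have hg_small : ‖g‖ < ‖f x₀‖ :=
    hS g hgV fun x hx => by simpa [hg_norm] using hγ x hx
  have hg_large : ‖f x₀‖ ≤ ‖g‖ := by
    simpa [hg_norm] using lp.norm_apply_le_norm two_ne_zero g (γ * x₀)
  exact hg_small.not_ge hg_large

/-- For an infinite discrete group `Γ` and a multiplier `σ`,
every finite-dimensional subspace of `ℓ²(Γ)` invariant under all left
`σ`-regular operators `L^σ_γ` is the zero subspace. -/
theorem finiteDimensional_invariant_subspace_eq_bot
    {Γ : Type*} [Group Γ] [Infinite Γ] (σ : Γ → Γ → ℂ)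
    (hnorm : ∀ γ δ : Γ, ‖σ γ δ‖ = 1)
    (hone : ∀ γ : Γ, σ γ 1 = 1 ∧ σ 1 γ = 1)
    (hcoc : ∀ γ₁ γ₂ γ₃ : Γ,
      σ γ₁ γ₂ * σ (γ₁ * γ₂) γ₃ = σ γ₁ (γ₂ * γ₃) * σ γ₂ γ₃)
    (V : Submodule ℂ (lp (fun _ : Γ => ℂ) 2))
    (hfd : FiniteDimensional ℂ V)
    (hInv : ∀ γ : Γ, ∀ f ∈ V, ∃ g ∈ V,
      ∀ x : Γ, (g : Γ → ℂ) x = f (γ⁻¹ * x) * σ γ (γ⁻¹ * x)) :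
    V = ⊥ :=
  finiteDimensional_invariant_subspace_eq_bot_general σ hnorm V hfd hInv
end

section
/- Let Γ be an infinite discrete group, σ a multiplier on Γ, and A a bounded linear operator on ℓ²(Γ) that commutes with the left σ-regular operators L^σ_γ for all γ ∈ Γ. Then for every complex number μ, the eigenspace ker(A − μ·I) is either the zero subspace or infinite dimensional. In particular, A has no eigenvalue of finite nonzero multiplicity (the discrete spectrum of such an operator is empty). -/
/-!
An eigenvector `f` of `A` has a point `x₀` with `f x₀ ≠ 0`, and the eigenspace is invariant
under every `U γ`. The twisted translate `U γ f` is an eigenvector of the same norm with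
`|(U γ f)(γ x₀)| = |f x₀|`. But on a finite-dimensional subspace of `ℓ²(Γ)` the evaluation
functionals at `x` have norm tending to `0` as `x` leaves finite sets, which is incompatible
with the lower bound `|f x₀| / ‖f‖` along the infinite orbit `γ x₀`.
-/

open Filter Topology

namespace lp

variable {α 𝕜 : Type*} {E : α → Type*} {p : ENNReal}

theorem tendsto_norm_cofinite_zero [∀ i, NormedAddCommGroup (E i)] (hp : 0 < p.toReal)
    (f : lp E p) : Tendsto (fun i ↦ ‖f i‖) cofinite (𝓝 0) := by
  have h := (((lp.memℓp f).summable hp).tendsto_cofinite_zero).rpow_const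
    (p := p.toReal⁻¹) (Or.inr (inv_nonneg.mpr hp.le))
  simpa [← Real.rpow_mul (norm_nonneg _), hp.ne', Real.zero_rpow (inv_ne_zero hp.ne')] using h

variable [NontriviallyNormedField 𝕜] [∀ i, NormedAddCommGroup (E i)] [∀ i, NormedSpace 𝕜 (E i)]
  [Fact (1 ≤ p)]

theorem tendsto_norm_evalCLM_comp_subtypeL [CompleteSpace 𝕜] (hp : p ≠ ⊤)
    (V : Submodule 𝕜 (lp E p)) [FiniteDimensional 𝕜 V] :
    Tendsto (fun i ↦ ‖(evalCLM 𝕜 E p i).comp V.subtypeL‖) cofinite (𝓝 0) := by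
  have hp' : 0 < p.toReal :=
    ENNReal.toReal_pos (zero_lt_one.trans_le Fact.out).ne' hp
  let v := Module.finBasis 𝕜 V
  set C := Fintype.card (Fin (Module.finrank 𝕜 V)) • ‖v.equivFunL.toContinuousLinearMap‖
  have hbound : ∀ i, ‖(evalCLM 𝕜 E p i).comp V.subtypeL‖ ≤ C * ∑ j, ‖(v j : lp E p) i‖ :=
    fun i ↦ v.opNorm_le (Finset.sum_nonneg fun j _ ↦ norm_nonneg _)
      fun j ↦ Finset.single_le_sum (f := fun j ↦ ‖(v j : lp E p) i‖)
        (fun j _ ↦ norm_nonneg _) (Finset.mem_univ j)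
  have hsum : Tendsto (fun i ↦ C * ∑ j, ‖(v j : lp E p) i‖) cofinite (𝓝 0) := by
    simpa using (tendsto_finsetSum Finset.univ
      fun j _ ↦ tendsto_norm_cofinite_zero hp' (v j : lp E p)).const_mul C
  exact squeeze_zero (fun _ ↦ ContinuousLinearMap.opNorm_nonneg _) hbound hsum

end lp

theorem eigenspace_of_commuting_operator_bot_or_infiniteDimensional_general
    {Γ : Type*} [Group Γ] [Infinite Γ] (σ : Γ → Γ → ℂ)
    (hnorm : ∀ γ δ : Γ, ‖σ γ δ‖ = 1)
    (U : Γ → (lp (fun _ : Γ => ℂ) 2 ≃ₗᵢ[ℂ] lp (fun _ : Γ => ℂ) 2))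
    (hU : ∀ (γ : Γ) (f : lp (fun _ : Γ => ℂ) 2) (x : Γ),
      (U γ f : Γ → ℂ) x = f (γ⁻¹ * x) * σ γ (γ⁻¹ * x))
    (A : lp (fun _ : Γ => ℂ) 2 →L[ℂ] lp (fun _ : Γ => ℂ) 2)
    (hA : ∀ (γ : Γ) (f : lp (fun _ : Γ => ℂ) 2), A (U γ f) = U γ (A f)) :
    ∀ μ : ℂ,
      Module.End.eigenspace (A.toLinearMap : Module.End ℂ (lp (fun _ : Γ => ℂ) 2)) μ = ⊥ ∨
      ¬ FiniteDimensional ℂ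
        (Module.End.eigenspace (A.toLinearMap : Module.End ℂ (lp (fun _ : Γ => ℂ) 2)) μ) := by
  intro μ
  set V := Module.End.eigenspace (A.toLinearMap : Module.End ℂ (lp (fun _ : Γ => ℂ) 2)) μ
  rw [or_iff_not_imp_left]
  intro hV _
  obtain ⟨f, hfV, hf⟩ := Submodule.exists_mem_ne_zero_of_ne_bot hV
  obtain ⟨x₀, hx₀⟩ : ∃ x₀, f x₀ ≠ 0 := by
    by_contra! h
    exact hf (lp.ext (funext h))
  have hUV : ∀ γ, U γ f ∈ V := fun γ ↦
    Module.End.mapsTo_genEigenspace_of_comm (LinearMap.ext (hA γ)) μ 1 hfV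
  set φ := fun x ↦ (lp.evalCLM ℂ (fun _ : Γ => ℂ) 2 x).comp V.subtypeL
  have hlower : ∀ γ, ‖f x₀‖ ≤ ‖φ (γ * x₀)‖ * ‖f‖ := fun γ ↦
    calc ‖f x₀‖ = ‖φ (γ * x₀) ⟨U γ f, hUV γ⟩‖ := by
          simp [φ, lp.evalCLM, hU, hnorm]
      _ ≤ ‖φ (γ * x₀)‖ * ‖U γ f‖ := (φ (γ * x₀)).le_opNorm _
      _ = ‖φ (γ * x₀)‖ * ‖f‖ := by rw [(U γ).norm_map]
  have horbit : Tendsto (fun γ ↦ ‖φ (γ * x₀)‖) cofinite (𝓝 0) :=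
    (lp.tendsto_norm_evalCLM_comp_subtypeL ENNReal.ofNat_ne_top V).comp
      (mul_left_injective x₀).tendsto_cofinite
  obtain ⟨γ, hγ⟩ := (horbit.eventually_lt_const
    (div_pos (norm_pos_iff.mpr hx₀) (norm_pos_iff.mpr hf))).exists
  exact (lt_div_iff₀ (norm_pos_iff.mpr hf)).mp hγ |>.not_ge (hlower γ)

/-- Let `Γ` be an infinite discrete group, `σ` a multiplier and
`A` a bounded operator on `ℓ²(Γ)` commuting with all the left `σ`-regular
unitaries `L^σ_γ` (here given as the isometric isomorphisms `U γ`, determined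
by the usual formula). Then every eigenspace `ker (A − μ)` is either zero or
infinite dimensional; in particular `A` has empty discrete spectrum. -/
theorem eigenspace_of_commuting_operator_bot_or_infiniteDimensional
    {Γ : Type*} [Group Γ] [Infinite Γ] (σ : Γ → Γ → ℂ)
    (hnorm : ∀ γ δ : Γ, ‖σ γ δ‖ = 1)
    (hone : ∀ γ : Γ, σ γ 1 = 1 ∧ σ 1 γ = 1)
    (hcoc : ∀ γ₁ γ₂ γ₃ : Γ,
      σ γ₁ γ₂ * σ (γ₁ * γ₂) γ₃ = σ γ₁ (γ₂ * γ₃) * σ γ₂ γ₃)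
    (U : Γ → (lp (fun _ : Γ => ℂ) 2 ≃ₗᵢ[ℂ] lp (fun _ : Γ => ℂ) 2))
    (hU : ∀ (γ : Γ) (f : lp (fun _ : Γ => ℂ) 2) (x : Γ),
      (U γ f : Γ → ℂ) x = f (γ⁻¹ * x) * σ γ (γ⁻¹ * x))
    (A : lp (fun _ : Γ => ℂ) 2 →L[ℂ] lp (fun _ : Γ => ℂ) 2)
    (hA : ∀ (γ : Γ) (f : lp (fun _ : Γ => ℂ) 2), A (U γ f) = U γ (A f)) :
    ∀ μ : ℂ,
      Module.End.eigenspace (A.toLinearMap : Module.End ℂ (lp (fun _ : Γ => ℂ) 2)) μ = ⊥ ∨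
      ¬ FiniteDimensional ℂ
        (Module.End.eigenspace (A.toLinearMap : Module.End ℂ (lp (fun _ : Γ => ℂ) 2)) μ) :=
  eigenspace_of_commuting_operator_bot_or_infiniteDimensional_general σ hnorm U hU A hA
end

section
/- Let ν₁, …, νₙ be positive integers and let Λ = ℤ + Σ_{i=1}^n ℤ·(1/νᵢ) be the additive subgroup of ℝ generated by 1 and the 1/νᵢ. Suppose θ ∈ ℝ is irrational, θ' ∈ ℝ, and the subgroups ℤθ + Λ and ℤθ' + Λ of ℝ are equal. Then θ' is irrational, and either θ − θ' ∈ Λ or θ + θ' ∈ Λ. -/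
/-!
Each of `θ`, `θ'` lies in the other's group `ℤθ + Λ`, and `Λ ⊆ ℚ`: say `θ = aθ' + q` and
`θ' = a'θ + q'`. Substituting gives `(1 - aa')θ ∈ ℚ`, so `aa' = 1` by irrationality of `θ`;
hence `a = ±1` and `θ ∓ θ' = q ∈ Λ`.
-/

open AddSubgroup Pointwise

def recipLattice {n : ℕ} (ν : Fin n → ℕ) : Set ℝ :=
  {x | ∃ (b : ℤ) (c : Fin n → ℤ), x = b + ∑ i, (c i : ℝ) / (ν i : ℝ)}

theorem zero_mem_recipLattice {n : ℕ} (ν : Fin n → ℕ) : (0 : ℝ) ∈ recipLattice ν :=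
  ⟨0, 0, by simp⟩

theorem recipLattice_subset_range_ratCast {n : ℕ} (ν : Fin n → ℕ) :
    recipLattice ν ⊆ Set.range ((↑) : ℚ → ℝ) := by
  rintro x ⟨b, c, rfl⟩
  exact ⟨b + ∑ i, (c i : ℚ) / (ν i : ℚ), by push_cast; rfl⟩

theorem setOf_eq_zmultiples_add_recipLattice {n : ℕ} (ν : Fin n → ℕ) (θ : ℝ) :
    {x : ℝ | ∃ (a b : ℤ) (c : Fin n → ℤ), x = a * θ + b + ∑ i, (c i : ℝ) / (ν i : ℝ)} =
      (zmultiples θ : Set ℝ) + recipLattice ν := by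
  ext x
  simp only [Set.mem_ofPred_eq, Set.mem_add, SetLike.mem_coe, mem_zmultiples_iff, recipLattice]
  constructor
  · rintro ⟨a, b, c, rfl⟩
    exact ⟨a • θ, ⟨a, rfl⟩, _, ⟨b, c, rfl⟩, by rw [zsmul_eq_mul, add_assoc]⟩
  · rintro ⟨_, ⟨a, rfl⟩, _, ⟨b, c, rfl⟩, rfl⟩
    exact ⟨a, b, c, by rw [zsmul_eq_mul, add_assoc]⟩

theorem self_mem_zmultiples_add {G : Type*} [AddGroup G] {Λ : Set G} (h₀ : (0 : G) ∈ Λ)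
    (θ : G) : θ ∈ (zmultiples θ : Set G) + Λ := by
  simpa using Set.add_mem_add (mem_zmultiples θ) h₀

namespace Irrational

variable {θ θ' : ℝ} {Λ : Set ℝ}

theorem of_mem_zmultiples_add (hΛ : Λ ⊆ Set.range ((↑) : ℚ → ℝ)) (hθ : Irrational θ)
    (h : θ ∈ (zmultiples θ' : Set ℝ) + Λ) : Irrational θ' := by
  obtain ⟨_, ⟨a, rfl⟩, _, hq, rfl⟩ := h
  obtain ⟨q, rfl⟩ := hΛ hq
  have hθ : Irrational ((a : ℝ) * θ' + q) := by rwa [← zsmul_eq_mul]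
  exact (hθ.of_add_ratCast q).of_intCast_mul a

theorem mul_eq_one_of_eq_zsmul_add_ratCast (hθ : Irrational θ) {a a' : ℤ} {q q' : ℚ}
    (h : θ = a • θ' + q) (h' : θ' = a' • θ + q') : a * a' = 1 := by
  by_contra hne
  have hrel : ((1 - a * a' : ℤ) : ℝ) * θ = ((a * q' + q : ℚ) : ℝ) := by
    rw [h', zsmul_eq_mul, zsmul_eq_mul] at h
    push_cast
    linear_combination h
  exact hθ.intCast_mul (sub_ne_zero.mpr (Ne.symm hne)) ⟨_, hrel.symm⟩

theorem sub_mem_or_add_mem_of_mem_zmultiples_add (hΛ : Λ ⊆ Set.range ((↑) : ℚ → ℝ))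
    (hθ : Irrational θ) (h : θ ∈ (zmultiples θ' : Set ℝ) + Λ)
    (h' : θ' ∈ (zmultiples θ : Set ℝ) + Λ) : θ - θ' ∈ Λ ∨ θ + θ' ∈ Λ := by
  obtain ⟨_, ⟨a, rfl⟩, l, hl, hθeq⟩ := h
  obtain ⟨_, ⟨a', rfl⟩, l', hl', hθ'eq⟩ := h'
  obtain ⟨q, rfl⟩ := hΛ hl
  obtain ⟨q', rfl⟩ := hΛ hl'
  beta_reduce at hθeq hθ'eq
  rcases Int.eq_one_or_neg_one_of_mul_eq_one'
      (hθ.mul_eq_one_of_eq_zsmul_add_ratCast hθeq.symm hθ'eq.symm) with ⟨rfl, -⟩ | ⟨rfl, -⟩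
  · left
    convert hl using 1
    rw [← hθeq, one_zsmul, add_sub_cancel_left]
  · right
    convert hl using 1
    rw [← hθeq, neg_one_zsmul, neg_add_eq_sub, sub_add_cancel]

end Irrational

theorem trace_range_equality_forces_theta_relation_general
    (n : ℕ) (ν : Fin n → ℕ) (θ θ' : ℝ)
    (hθ : Irrational θ)
    (heq : {x : ℝ | ∃ (a b : ℤ) (c : Fin n → ℤ),
        x = a * θ + b + ∑ i, (c i : ℝ) / (ν i : ℝ)}
      = {x : ℝ | ∃ (a b : ℤ) (c : Fin n → ℤ),
        x = a * θ' + b + ∑ i, (c i : ℝ) / (ν i : ℝ)}) :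
    Irrational θ' ∧
      ((∃ (b : ℤ) (c : Fin n → ℤ),
          θ - θ' = b + ∑ i, (c i : ℝ) / (ν i : ℝ)) ∨
       (∃ (b : ℤ) (c : Fin n → ℤ),
          θ + θ' = b + ∑ i, (c i : ℝ) / (ν i : ℝ))) := by
  have hΛ := recipLattice_subset_range_ratCast ν
  rw [setOf_eq_zmultiples_add_recipLattice, setOf_eq_zmultiples_add_recipLattice] at heq
  have h : θ ∈ (zmultiples θ' : Set ℝ) + recipLattice ν :=
    heq ▸ self_mem_zmultiples_add (zero_mem_recipLattice ν) θ
  have h' : θ' ∈ (zmultiples θ : Set ℝ) + recipLattice ν :=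
    heq ▸ self_mem_zmultiples_add (zero_mem_recipLattice ν) θ'
  exact ⟨hθ.of_mem_zmultiples_add hΛ h, hθ.sub_mem_or_add_mem_of_mem_zmultiples_add hΛ h h'⟩

/-- Let `Λ = ℤ + Σᵢ ℤ·(1/νᵢ) ⊆ ℝ`. If `θ` is irrational,
`θ' ∈ ℝ`, and `ℤθ + Λ = ℤθ' + Λ` as subsets of `ℝ`, then `θ'` is irrational
and either `θ − θ' ∈ Λ` or `θ + θ' ∈ Λ`. -/
theorem trace_range_equality_forces_theta_relation
    (n : ℕ) (ν : Fin n → ℕ) (hν : ∀ i, 0 < ν i) (θ θ' : ℝ)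
    (hθ : Irrational θ)
    (heq : {x : ℝ | ∃ (a b : ℤ) (c : Fin n → ℤ),
        x = a * θ + b + ∑ i, (c i : ℝ) / (ν i : ℝ)}
      = {x : ℝ | ∃ (a b : ℤ) (c : Fin n → ℤ),
        x = a * θ' + b + ∑ i, (c i : ℝ) / (ν i : ℝ)}) :
    Irrational θ' ∧
      ((∃ (b : ℤ) (c : Fin n → ℤ),
          θ - θ' = b + ∑ i, (c i : ℝ) / (ν i : ℝ)) ∨
       (∃ (b : ℤ) (c : Fin n → ℤ),
          θ + θ' = b + ∑ i, (c i : ℝ) / (ν i : ℝ))) :=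
  trace_range_equality_forces_theta_relation_general n ν θ θ' hθ heq
end
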